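/- arXiv:1606.02081 — 5 statements merged into one kernel-verified Lean document; each statement's English description precedes it below -/
import Mathlib

section
/- A non-decreasing sequence (d_1, ..., d_n) of non-negative real numbers is the score sequence of some self-converse generalised tournament on n vertices if and only if it satisfies condition I (for every subset J of {1,...,n}, the sum of d_i over i in J is at least binom(|J|,2), with equality when J = {1,...,n}) and condition II (d_i + d_{n+1-i} = n - 1 for all i = 1,...,n). -/
/-- A generalised tournament on vertex set `Fin n`: a `[0,1]`-valued weight function with
`α i j + α j i = 1` for `i ≠ j` and `α i i = 0`. -/
def IsGenTournament {n : ℕ} (α : Fin n → Fin n → ℝ) : Prop :=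
  (∀ i j, 0 ≤ α i j) ∧ (∀ i j, α i j ≤ 1) ∧
  (∀ i j, i ≠ j → α i j + α j i = 1) ∧ (∀ i, α i i = 0)

/-- A generalised tournament is self-converse if some bijection of the vertex set is an
isomorphism onto its converse, i.e. `α i j = 1 - α (ρ i) (ρ j)` off the diagonal. -/
def IsSelfConverse {n : ℕ} (α : Fin n → Fin n → ℝ) : Prop :=
  ∃ ρ : Equiv.Perm (Fin n), ∀ i j, i ≠ j → α i j = 1 - α (ρ i) (ρ j)

/-- Condition I: every subset `J` of the indices has score sum at least `binom |J| 2`,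
with equality for the full set. -/
def CondI {n : ℕ} (d : Fin n → ℝ) : Prop :=
  (∀ J : Finset (Fin n), (J.card.choose 2 : ℝ) ≤ ∑ i ∈ J, d i) ∧
  ∑ i, d i = (n.choose 2 : ℝ)

/-- Condition II: `d i + d (n+1-i) = n - 1` for all `i` (here `Fin.rev` plays the role of
`i ↦ n+1-i`). -/
def CondII {n : ℕ} (d : Fin n → ℝ) : Prop :=
  ∀ i : Fin n, d i + d i.rev = (n : ℝ) - 1

/-!
Summing `α` over `J × J` shows that every generalised tournament satisfies condition I, and a
converse-isomorphism `ρ` gives `d (ρ i) = n - 1 - d i`; for non-decreasing `d` the rearrangement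
`i ↦ d (ρ (rev i))` is again non-decreasing, hence equal to `d`, which is condition II.

Conversely, condition I alone yields a generalised tournament with scores `d`: take one that
minimises `∑ (s i - d i) ^ 2` over the compact set of generalised tournaments. Moving weight from
an arc `a → b` to `b → a` shows that `α a b > 0` forces `s a - d a ≤ s b - d b`. So the set `R`
of vertices with `s i > d i` sends no weight outside itself, whence
`∑_R d < ∑_R s = binom |R| 2`, contradicting condition I unless `R = ∅`; the equal totals then give
`s = d`. Averaging `α i j` with `α (rev j) (rev i)` makes it self-converse via `rev`, and turns the
scores into `(d i + n - 1 - d (rev i)) / 2`, which is `d i` by condition II.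
-/

def score {n : ℕ} (α : Fin n → Fin n → ℝ) (i : Fin n) : ℝ := ∑ j, α i j

namespace IsGenTournament

variable {n : ℕ} {α : Fin n → Fin n → ℝ}

theorem sum_add_swap_eq_card_sub_one (hα : IsGenTournament α) {J : Finset (Fin n)} {i : Fin n}
    (hi : i ∈ J) : ∑ j ∈ J, (α i j + α j i) = J.card - 1 := by
  have hpair : ∀ j, α i j + α j i = 1 - if i = j then 1 else 0 := by
    intro j
    by_cases hij : i = j
    · subst hij; simp [hα.2.2.2 i]
    · simp [hij, hα.2.2.1 i j hij]
  simp [hpair, Finset.sum_sub_distrib, Finset.sum_ite_eq, hi]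

theorem sum_apply_eq_sub_score (hα : IsGenTournament α) (i : Fin n) :
    ∑ j, α j i = n - 1 - score α i := by
  have := hα.sum_add_swap_eq_card_sub_one (Finset.mem_univ i)
  rw [Finset.sum_add_distrib, Finset.card_univ, Fintype.card_fin] at this
  rw [score]
  linarith

theorem sum_sum_eq_choose (hα : IsGenTournament α) (J : Finset (Fin n)) :
    ∑ i ∈ J, ∑ j ∈ J, α i j = (J.card.choose 2 : ℝ) := by
  have hdouble : 2 * ∑ i ∈ J, ∑ j ∈ J, α i j = J.card * (J.card - 1) := by
    calc 2 * ∑ i ∈ J, ∑ j ∈ J, α i j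
        = ∑ i ∈ J, ∑ j ∈ J, α i j + ∑ i ∈ J, ∑ j ∈ J, α j i := by rw [Finset.sum_comm]; ring
      _ = ∑ i ∈ J, ∑ j ∈ J, (α i j + α j i) := by simp only [Finset.sum_add_distrib]
      _ = ∑ _i ∈ J, ((J.card : ℝ) - 1) := Finset.sum_congr rfl fun i hi => hα.sum_add_swap_eq_card_sub_one hi
      _ = J.card * (J.card - 1) := by simp; ring
  rw [Nat.cast_choose_two]
  linarith

theorem condI_score (hα : IsGenTournament α) : CondI (score α) := by
  refine ⟨fun J => ?_, by simpa [score] using hα.sum_sum_eq_choose Finset.univ⟩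
  rw [← hα.sum_sum_eq_choose J]
  exact Finset.sum_le_sum fun i _ =>
    Finset.sum_le_sum_of_subset_of_nonneg (Finset.subset_univ J) fun j _ _ => hα.1 i j

theorem sum_score_eq_choose (hα : IsGenTournament α) {J : Finset (Fin n)}
    (hJ : ∀ i ∈ J, ∀ j ∉ J, α i j = 0) : ∑ i ∈ J, score α i = (J.card.choose 2 : ℝ) := by
  rw [← hα.sum_sum_eq_choose J]
  refine Finset.sum_congr rfl fun i hi => ?_
  rw [score, ← Finset.sum_add_sum_compl J, add_eq_left]
  exact Finset.sum_eq_zero fun j hj => hJ i hi j (Finset.mem_compl.mp hj)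

end IsGenTournament

theorem sum_sq_add_mul_sub_indicator {ι : Type*} [Fintype ι] [DecidableEq ι] (e : ι → ℝ)
    {a b : ι} (hab : a ≠ b) (ε : ℝ) :
    ∑ i, (e i + ε * ((if i = b then 1 else 0) - if i = a then 1 else 0)) ^ 2
      = ∑ i, e i ^ 2 + 2 * ε * (e b - e a) + 2 * ε ^ 2 := by
  have hpoint : ∀ i, (e i + ε * ((if i = b then 1 else 0) - if i = a then 1 else 0)) ^ 2
      = e i ^ 2 + (if i = b then 2 * ε * e i + ε ^ 2 else 0)
        - (if i = a then 2 * ε * e i - ε ^ 2 else 0) := by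
    intro i
    split_ifs with hb ha <;> first | exact absurd (ha.symm.trans hb) hab | ring
  simp only [hpoint, Finset.sum_sub_distrib, Finset.sum_add_distrib, Finset.sum_ite_eq',
    Finset.mem_univ, if_true]
  ring

section Landau

variable {n : ℕ} {α : Fin n → Fin n → ℝ} {d : Fin n → ℝ}

def transfer (α : Fin n → Fin n → ℝ) (a b : Fin n) (ε : ℝ) : Fin n → Fin n → ℝ :=
  fun i j => α i j + ε * ((if i = b ∧ j = a then 1 else 0) - (if i = a ∧ j = b then 1 else 0))

theorem IsGenTournament.transfer (hα : IsGenTournament α) {a b : Fin n} (hab : a ≠ b)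
    {ε : ℝ} (hε : 0 ≤ ε) (hεa : ε ≤ α a b) : IsGenTournament (transfer α a b ε) := by
  obtain ⟨h0, h1, hswap, hdiag⟩ := hα
  have hba := hswap a b hab
  refine ⟨fun i j => ?_, fun i j => ?_, fun i j hij => ?_, fun i => ?_⟩ <;>
    simp only [_root_.transfer]
  · have := h0 i j
    split_ifs <;> grind
  · have := h1 i j
    split_ifs <;> grind
  · have := hswap i j hij
    split_ifs <;> grind
  · grind

theorem score_transfer (α : Fin n → Fin n → ℝ) (a b : Fin n) (ε : ℝ) (i : Fin n) :
    score (transfer α a b ε) i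
      = score α i + ε * ((if i = b then 1 else 0) - if i = a then 1 else 0) := by
  simp [score, _root_.transfer, Finset.sum_add_distrib, ← Finset.mul_sum, ite_and]

theorem isCompact_setOf_isGenTournament :
    IsCompact {α : Fin n → Fin n → ℝ | IsGenTournament α} := by
  refine (isCompact_univ_pi fun _ => isCompact_univ_pi fun _ =>
    isCompact_Icc (a := (0 : ℝ)) (b := 1)).of_isClosed_subset ?_ ?_
  · simp only [IsGenTournament, Set.ofPred_and, Set.ofPred_forall]
    refine .inter ?_ (.inter ?_ (.inter ?_ ?_)) <;> repeat apply isClosed_iInter; intro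
    all_goals first
      | exact isClosed_le (by fun_prop) (by fun_prop)
      | exact isClosed_eq (by fun_prop) (by fun_prop)
  · intro α hα
    simp only [Set.mem_pi, Set.mem_univ, Set.mem_Icc, forall_const]
    exact fun i j => ⟨hα.1 i j, hα.2.1 i j⟩

theorem IsGenTournament.score_sub_le_of_isMinOn (hα : IsGenTournament α)
    (hmin : IsMinOn (fun β => ∑ i, (score β i - d i) ^ 2) {β | IsGenTournament β} α)
    {a b : Fin n} (hab : a ≠ b) (hpos : 0 < α a b) : score α a - d a ≤ score α b - d b := by
  by_contra! hlt
  set ε := min (α a b) ((score α a - d a - (score α b - d b)) / 2)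
  have hε : 0 < ε := lt_min hpos (by linarith)
  have hεgap : ε ≤ (score α a - d a - (score α b - d b)) / 2 := min_le_right _ _
  have hle := hmin (hα.transfer hab hε.le (min_le_left _ _))
  simp only [Set.mem_ofPred_eq, score_transfer, add_sub_right_comm _ (ε * _)] at hle
  rw [sum_sq_add_mul_sub_indicator (fun i => score α i - d i) hab] at hle
  nlinarith

theorem exists_isGenTournament_score_eq (hd : CondI d) :
    ∃ α : Fin n → Fin n → ℝ, IsGenTournament α ∧ score α = d := by
  have hhalf : IsGenTournament fun i j : Fin n => if i = j then (0 : ℝ) else 1 / 2 := by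
    refine ⟨fun i j => ?_, fun i j => ?_, fun i j hij => ?_, fun i => ?_⟩ <;>
      simp only [ne_eq] at * <;> split_ifs <;> grind
  obtain ⟨α, hα, hmin⟩ := isCompact_setOf_isGenTournament.exists_isMinOn ⟨_, hhalf⟩
    (f := fun β => ∑ i, (score β i - d i) ^ 2) (by unfold score; fun_prop)
  refine ⟨α, hα, ?_⟩
  set R := Finset.univ.filter fun i => d i < score α i
  have hout : ∀ a ∈ R, ∀ b ∉ R, α a b = 0 := by
    intro a ha b hb
    simp only [R, Finset.mem_filter, Finset.mem_univ, true_and, not_lt] at ha hb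
    by_contra hne
    have := hα.score_sub_le_of_isMinOn hmin (by rintro rfl; linarith)
      (lt_of_le_of_ne (hα.1 a b) (Ne.symm hne))
    linarith
  have hRempty : R = ∅ := by
    by_contra hne
    have hlt := Finset.sum_lt_sum_of_nonempty (Finset.nonempty_iff_ne_empty.mpr hne)
      fun i hi => (Finset.mem_filter.mp hi).2
    linarith [hd.1 R, hα.sum_score_eq_choose hout]
  have hle : ∀ i ∈ Finset.univ, score α i ≤ d i := fun i _ => by
    simpa [R] using Finset.eq_empty_iff_forall_notMem.mp hRempty i
  funext i
  exact (Finset.sum_eq_sum_iff_of_le hle).mp (by rw [hd.2]; simpa using hα.condI_score.2) i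
    (Finset.mem_univ i)

end Landau

theorem Monotone.comp_perm_eq_self {n : ℕ} {β : Type*} [LinearOrder β] {f : Fin n → β}
    {σ : Equiv.Perm (Fin n)} (hf : Monotone f) (hfσ : Monotone (f ∘ σ)) : f ∘ σ = f := by
  simpa [Tuple.sort_eq_refl_iff_monotone.mpr hf] using
    Tuple.comp_sort_eq_comp_iff_monotone.mpr hfσ

theorem condII_of_monotone_of_apply_perm {n : ℕ} {d : Fin n → ℝ} (hd : Monotone d)
    {ρ : Equiv.Perm (Fin n)} (hρ : ∀ i, d (ρ i) = n - 1 - d i) : CondII d := by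
  have hmono : Monotone (d ∘ (Fin.revPerm.trans ρ)) := fun a b hab => by
    simp only [Function.comp_apply, Equiv.trans_apply, Fin.revPerm_apply, hρ]
    linarith [hd (Fin.rev_le_rev.mpr hab)]
  intro i
  have := congrFun (hd.comp_perm_eq_self hmono) i
  simp only [Function.comp_apply, Equiv.trans_apply, Fin.revPerm_apply, hρ] at this
  linarith

section SelfConverse

variable {n : ℕ} {α : Fin n → Fin n → ℝ}

theorem IsGenTournament.apply_perm_eq (hα : IsGenTournament α) {ρ : Equiv.Perm (Fin n)}
    (hρ : ∀ i j, i ≠ j → α i j = 1 - α (ρ i) (ρ j)) (i j : Fin n) : α (ρ i) (ρ j) = α j i := by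
  by_cases hij : i = j
  · subst hij; rw [hα.2.2.2, hα.2.2.2]
  · linarith [hρ i j hij, hα.2.2.1 i j hij]

theorem IsGenTournament.score_apply_perm (hα : IsGenTournament α) {ρ : Equiv.Perm (Fin n)}
    (hρ : ∀ i j, i ≠ j → α i j = 1 - α (ρ i) (ρ j)) (i : Fin n) :
    score α (ρ i) = n - 1 - score α i := by
  rw [← hα.sum_apply_eq_sub_score, score, ← Equiv.sum_comp ρ]
  exact Finset.sum_congr rfl fun j _ => hα.apply_perm_eq hρ i j

noncomputable def revSymm (α : Fin n → Fin n → ℝ) : Fin n → Fin n → ℝ :=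
  fun i j => (α i j + α j.rev i.rev) / 2

theorem IsGenTournament.revSymm (hα : IsGenTournament α) : IsGenTournament (revSymm α) := by
  obtain ⟨h0, h1, hswap, hdiag⟩ := hα
  refine ⟨fun i j => ?_, fun i j => ?_, fun i j hij => ?_, fun i => ?_⟩ <;>
    simp only [_root_.revSymm]
  · linarith [h0 i j, h0 j.rev i.rev]
  · linarith [h1 i j, h1 j.rev i.rev]
  · linarith [hswap i j hij, hswap j.rev i.rev (Fin.rev_injective.ne (Ne.symm hij))]
  · simp [hdiag]

theorem isSelfConverse_revSymm (hα : IsGenTournament α) :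
    IsSelfConverse (revSymm α) := by
  refine ⟨Fin.revPerm, fun i j hij => ?_⟩
  simp only [revSymm, Fin.revPerm_apply, Fin.rev_rev]
  linarith [hα.2.2.1 j i (Ne.symm hij), hα.2.2.1 i.rev j.rev (Fin.rev_injective.ne hij)]

theorem score_revSymm (hα : IsGenTournament α) (i : Fin n) :
    score (revSymm α) i = (score α i + (n - 1 - score α i.rev)) / 2 := by
  rw [← hα.sum_apply_eq_sub_score, ← Equiv.sum_comp Fin.revPerm]
  simp only [score, revSymm, ← Finset.sum_div, Finset.sum_add_distrib, Fin.revPerm_apply]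

end SelfConverse

theorem selfConverse_gen_tournament_score_iff_general (n : ℕ) (d : Fin n → ℝ)
    (hmono : Monotone d) :
    (∃ α : Fin n → Fin n → ℝ, IsGenTournament α ∧ IsSelfConverse α ∧
      ∀ i, ∑ j, α i j = d i) ↔ (CondI d ∧ CondII d) := by
  constructor
  · rintro ⟨α, hα, ⟨ρ, hρ⟩, hscore⟩
    obtain rfl : score α = d := funext hscore
    exact ⟨hα.condI_score, condII_of_monotone_of_apply_perm hmono (hα.score_apply_perm hρ)⟩
  · rintro ⟨hI, hII⟩
    obtain ⟨α, hα, rfl⟩ := exists_isGenTournament_score_eq hI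
    refine ⟨revSymm α, hα.revSymm, isSelfConverse_revSymm hα, fun i => ?_⟩
    rw [← score, score_revSymm hα]
    linarith [hII i]

/-- A non-decreasing sequence of non-negative reals is the score sequence of some
self-converse generalised tournament iff it satisfies conditions I and II. -/
theorem selfConverse_gen_tournament_score_iff (n : ℕ) (d : Fin n → ℝ)
    (hmono : Monotone d) (hpos : ∀ i, 0 ≤ d i) :
    (∃ α : Fin n → Fin n → ℝ, IsGenTournament α ∧ IsSelfConverse α ∧
      ∀ i, ∑ j, α i j = d i) ↔ (CondI d ∧ CondII d) :=
  selfConverse_gen_tournament_score_iff_general n d hmono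
end

section
/- A non-decreasing sequence (d_1, ..., d_n) of non-negative integers is the score sequence of some (non-generalised) tournament on n vertices if and only if it satisfies condition I: for every subset J of {1,...,n}, the sum of d_i over i in J is at least binom(|J|,2), with equality when J = {1,...,n}. -/
/-- A (non-generalised) tournament: a `{0,1}`-valued weight function with
`α u v + α v u = 1` for `u ≠ v` and `α v v = 0`. -/
def IsTournament {V : Type*} (α : V → V → ℝ) : Prop :=
  (∀ u v, α u v = 0 ∨ α u v = 1) ∧ (∀ u v, u ≠ v → α u v + α v u = 1) ∧ (∀ v, α v v = 0)

/-!
Necessity: the arcs inside `J` contribute exactly `binom |J| 2` to the scores of `J`.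
Sufficiency via Hall's theorem: give vertex `i` a set of `d i` slots and let each pair `{i, j}`
claim one slot of `i` or of `j`, its winner. A family `P` of pairs spans a set `U` of vertices
with `|P| ≤ binom |U| 2`, so condition I is Hall's condition. The resulting injection of the
`binom n 2` pairs into the `∑ d i = binom n 2` slots is onto, so vertex `i` wins `d i` times.
-/

open Finset

namespace IsTournament

variable {V : Type*} {α : V → V → ℝ}

lemma nonneg (hα : IsTournament α) (u v : V) : 0 ≤ α u v := by
  rcases hα.1 u v with h | h <;> simp [h]

lemma sum_sum_eq_choose_two [DecidableEq V] (hα : IsTournament α) (J : Finset V) :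
    ∑ i ∈ J, ∑ j ∈ J, α i j = ((#J).choose 2 : ℝ) := by
  have hpair : ∀ i ∈ J, ∑ j ∈ J, (α i j + α j i) = #J - 1 := by
    intro i hi
    rw [← sum_erase_add _ _ hi, hα.2.2 i, add_zero, add_zero,
      sum_congr rfl fun j hj => hα.2.1 i j (ne_of_mem_erase hj).symm]
    simp [card_erase_of_mem hi, Nat.cast_sub (card_pos.2 ⟨i, hi⟩)]
  have htwice : 2 * ∑ i ∈ J, ∑ j ∈ J, α i j = #J * (#J - 1) := by
    rw [two_mul]
    nth_rw 2 [sum_comm]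
    rw [← sum_add_distrib]
    simp_rw [← sum_add_distrib]
    rw [sum_congr rfl hpair, sum_const, nsmul_eq_mul]
  rw [Nat.cast_choose_two]
  linarith

lemma choose_two_le_sum_score [Fintype V] [DecidableEq V] (hα : IsTournament α) (J : Finset V) :
    ((#J).choose 2 : ℝ) ≤ ∑ i ∈ J, ∑ j, α i j := by
  rw [← hα.sum_sum_eq_choose_two J]
  exact sum_le_sum fun i _ => sum_le_sum_of_subset_of_nonneg (subset_univ J)
    fun j _ _ => hα.nonneg i j

end IsTournament

section

variable {V : Type*} [DecidableEq V]

def tournamentOfWinner (w : Sym2 V → V) (i j : V) : ℝ :=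
  if i ≠ j ∧ w s(i, j) = i then 1 else 0

variable {w : Sym2 V → V} {d : V → ℕ}

lemma isTournament_tournamentOfWinner (hw : ∀ z, w z ∈ z) :
    IsTournament (tournamentOfWinner w) := by
  refine ⟨fun i j => by unfold tournamentOfWinner; split_ifs <;> simp, fun i j hij => ?_,
    fun i => by simp [tournamentOfWinner]⟩
  have hmem := hw s(i, j)
  rw [Sym2.mem_iff] at hmem
  rcases hmem with h | h <;>
    simp [tournamentOfWinner, Sym2.eq_swap (a := j), h, hij, hij.symm]

lemma sum_tournamentOfWinner [Fintype V] (hw : ∀ z, w z ∈ z) (i : V) :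
    ∑ j, tournamentOfWinner w i j = #{z : Sym2 V | ¬z.IsDiag ∧ w z = i} := by
  simp only [tournamentOfWinner, sum_boole, Nat.cast_inj]
  refine card_nbij (fun j => s(i, j)) (fun j hj => by simpa using hj)
    (fun j _ j' _ h => Sym2.congr_right.1 h) fun z hz => ?_
  obtain ⟨hdiag, rfl⟩ : ¬z.IsDiag ∧ w z = i := by simpa using hz
  have hi : w z ∈ z := hw z
  refine ⟨Sym2.Mem.other hi, ?_, Sym2.other_spec hi⟩
  simpa only [coe_filter, mem_univ, true_and, Set.mem_ofPred_eq, Sym2.other_spec hi, and_true]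
    using (Sym2.other_ne hdiag hi).symm

lemma card_le_choose_two_biUnion_toFinset (s : Finset {z : Sym2 V // ¬z.IsDiag}) :
    #s ≤ (#(s.biUnion fun z => z.1.toFinset)).choose 2 := by
  rw [← Sym2.card_image_offDiag]
  refine card_le_card_of_injOn Subtype.val (fun z hz => ?_) Subtype.val_injective.injOn
  obtain ⟨z, hdiag⟩ := z
  induction z using Sym2.ind with
  | _ a b =>
    simp only [Sym2.mk_isDiag_iff] at hdiag
    simp only [coe_image, Set.mem_image, mem_coe, mem_offDiag, mem_biUnion, Sym2.mem_toFinset,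
      Prod.exists, Function.uncurry_apply_pair]
    exact ⟨a, b, ⟨⟨_, hz, Sym2.mem_mk_left a b⟩, ⟨_, hz, Sym2.mem_mk_right a b⟩, hdiag⟩, rfl⟩

lemma exists_injective_slot (hJ : ∀ J : Finset V, (#J).choose 2 ≤ ∑ i ∈ J, d i) :
    ∃ f : {z : Sym2 V // ¬z.IsDiag} → Σ _ : V, ℕ,
      Function.Injective f ∧ ∀ z, (f z).1 ∈ z.1 ∧ (f z).2 < d (f z).1 := by
  let slots (z : {z : Sym2 V // ¬z.IsDiag}) := z.1.toFinset.sigma fun i => range (d i)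
  obtain ⟨f, hinj, hf⟩ := (all_card_le_biUnion_card_iff_exists_injective slots).1 fun s => by
    have hunion :
        s.biUnion slots = (s.biUnion fun z => z.1.toFinset).sigma fun i => range (d i) := by
      ext x; simp only [slots, mem_biUnion, mem_sigma]; aesop
    rw [hunion, card_sigma]
    simp only [card_range]
    exact (card_le_choose_two_biUnion_toFinset s).trans (hJ _)
  exact ⟨f, hinj, fun z => by simpa [slots] using hf z⟩

lemma exists_winner [Fintype V] (hJ : ∀ J : Finset V, (#J).choose 2 ≤ ∑ i ∈ J, d i)
    (htot : ∑ i, d i = (Fintype.card V).choose 2) :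
    ∃ w : Sym2 V → V, (∀ z, w z ∈ z) ∧ ∀ i, #{z : Sym2 V | ¬z.IsDiag ∧ w z = i} = d i := by
  obtain ⟨f, hinj, hf⟩ := exists_injective_slot hJ
  let g (z : Sym2 V) : Σ _ : V, ℕ := if h : z.IsDiag then ⟨z.out.1, 0⟩ else f ⟨z, h⟩
  have hg_mem (z : Sym2 V) : (g z).1 ∈ z := by
    by_cases h : z.IsDiag
    · simp only [g, dif_pos h, Sym2.out_fst_mem]
    · simp only [g, dif_neg h, (hf ⟨z, h⟩).1]
  refine ⟨fun z => (g z).1, hg_mem, fun i => ?_⟩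
  have hle (i : V) : #{z : Sym2 V | ¬z.IsDiag ∧ (g z).1 = i} ≤ d i := by
    calc #{z : Sym2 V | ¬z.IsDiag ∧ (g z).1 = i}
        ≤ #(({i} : Finset V).sigma fun i => range (d i)) := by
          refine card_le_card_of_injOn g (fun z hz => ?_) fun z hz z' hz' h => ?_
          · obtain ⟨hdiag, rfl⟩ : ¬z.IsDiag ∧ (g z).1 = i := by simpa using hz
            simp only [mem_coe, mem_sigma, mem_singleton, mem_range, true_and]
            simpa only [g, dif_neg hdiag] using (hf ⟨z, hdiag⟩).2
          · simp only [coe_filter, mem_univ, true_and, Set.mem_ofPred_eq] at hz hz'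
            exact congrArg Subtype.val
              (hinj (by simpa only [g, dif_neg hz.1, dif_neg hz'.1] using h))
      _ = d i := by simp
  have hsum : ∑ i, #{z : Sym2 V | ¬z.IsDiag ∧ (g z).1 = i} = ∑ i, d i := by
    rw [htot, ← Sym2.card_subtype_not_diag, Fintype.card_subtype,
      card_eq_sum_card_fiberwise (f := fun z => (g z).1) (t := univ) (fun _ _ => mem_univ _)]
    simp only [filter_filter]
  exact (sum_eq_sum_iff_of_le fun i _ => hle i).1 hsum i (mem_univ i)

end

theorem exists_isTournament_score_iff {V : Type*} [Fintype V] [DecidableEq V] (d : V → ℕ) :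
    (∃ α : V → V → ℝ, IsTournament α ∧ ∀ i, ∑ j, α i j = (d i : ℝ)) ↔
      (∀ J : Finset V, (#J).choose 2 ≤ ∑ i ∈ J, d i) ∧ ∑ i, d i = (Fintype.card V).choose 2 := by
  constructor
  · rintro ⟨α, hα, hscore⟩
    refine ⟨fun J => ?_, ?_⟩
    · have hJ := hα.choose_two_le_sum_score J
      simp only [hscore] at hJ
      exact_mod_cast hJ
    · have hall := hα.sum_sum_eq_choose_two univ
      simp only [hscore, card_univ] at hall
      exact_mod_cast hall
  · rintro ⟨hJ, htot⟩
    obtain ⟨w, hw, hwins⟩ := exists_winner hJ htot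
    exact ⟨tournamentOfWinner w, isTournament_tournamentOfWinner hw,
      fun i => by rw [sum_tournamentOfWinner hw, hwins]⟩

theorem landau_general (n : ℕ) (d : Fin n → ℕ) :
    (∃ α : Fin n → Fin n → ℝ, IsTournament α ∧ ∀ i, ∑ j, α i j = (d i : ℝ)) ↔
    ((∀ J : Finset (Fin n), J.card.choose 2 ≤ ∑ i ∈ J, d i) ∧
      ∑ i, d i = n.choose 2) := by
  simpa using exists_isTournament_score_iff d

/-- Landau's theorem: a non-decreasing sequence of non-negative integers is the score
sequence of some tournament iff it satisfies condition I (subset sums are at least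
`binom |J| 2`, with equality for the full set). -/
theorem landau (n : ℕ) (d : Fin n → ℕ) (hmono : Monotone d) :
    (∃ α : Fin n → Fin n → ℝ, IsTournament α ∧ ∀ i, ∑ j, α i j = (d i : ℝ)) ↔
    ((∀ J : Finset (Fin n), J.card.choose 2 ≤ ∑ i ∈ J, d i) ∧
      ∑ i, d i = n.choose 2) :=
  landau_general n d
end

section
/- If a self-converse generalised tournament on n vertices has a non-decreasing score sequence (d_1, ..., d_n), then d_i + d_{n+1-i} = n - 1 for all i = 1, ..., n; that is, the score sequence satisfies condition II. -/
/-!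
An isomorphism `ρ` onto the converse gives `α i j + α (ρ i) (ρ j) = 1` for `i ≠ j`, so summing over
`j` yields `d i + d (ρ i) = n - 1` for every vertex. Then `j ↦ n - 1 - d (rev j)` is a monotone
rearrangement of the monotone sequence `d` (through the permutation `ρ` followed by reversal),
and a monotone rearrangement of a monotone sequence is the sequence itself.
-/

open Finset

theorem sum_add_sum_perm_eq_card_sub_one {n : ℕ} {α : Fin n → Fin n → ℝ}
    (hdiag : ∀ i, α i i = 0) {ρ : Equiv.Perm (Fin n)}
    (hρ : ∀ i j, i ≠ j → α i j = 1 - α (ρ i) (ρ j)) (i : Fin n) :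
    ∑ j, α i j + ∑ j, α (ρ i) j = (n : ℝ) - 1 := by
  calc ∑ j, α i j + ∑ j, α (ρ i) j = ∑ j, (α i j + α (ρ i) (ρ j)) := by
        rw [sum_add_distrib, Equiv.sum_comp ρ (α (ρ i))]
    _ = ∑ j, (1 - if j = i then 1 else 0) := by
        refine sum_congr rfl fun j _ => ?_
        split_ifs with h
        · simp [h, hdiag]
        · rw [hρ i j (Ne.symm h)]; ring
    _ = (n : ℝ) - 1 := by simp

theorem Monotone.add_rev_eq_of_add_perm_eq {G : Type*} [AddCommGroup G] [LinearOrder G]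
    [IsOrderedAddMonoid G] {n : ℕ} {d : Fin n → G} (hd : Monotone d) {ρ : Equiv.Perm (Fin n)}
    {c : G} (hρ : ∀ i, d i + d (ρ i) = c) (i : Fin n) : d i + d i.rev = c := by
  set g : Fin n → G := fun j => c - d j.rev
  have hg : Monotone g := fun a b hab => sub_le_sub_left (hd (Fin.rev_le_rev.mpr hab)) c
  have hgρ : g ∘ (ρ.trans Fin.revPerm) = d := by
    funext j
    simp [g, ← hρ j]
  have hgd : g = d := by
    have := Tuple.unique_monotone (f := g) (σ := ρ.trans Fin.revPerm) (τ := 1) (hgρ ▸ hd) hg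
    rwa [hgρ, Equiv.Perm.coe_one, Function.comp_id, eq_comm] at this
  rw [← congrFun hgd i]
  simp [g]

/-- `Fin.rev` plays the role of `i ↦ n+1-i`. -/
theorem selfConverse_score_sequence_satisfies_condII (n : ℕ) (α : Fin n → Fin n → ℝ)
    (hα : IsGenTournament α) (hsc : IsSelfConverse α)
    (d : Fin n → ℝ) (hd : ∀ i, ∑ j, α i j = d i) (hmono : Monotone d) :
    ∀ i : Fin n, d i + d i.rev = (n : ℝ) - 1 := by
  obtain ⟨-, -, -, hdiag⟩ := hα
  obtain ⟨ρ, hρ⟩ := hsc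
  refine hmono.add_rev_eq_of_add_perm_eq (ρ := ρ) fun i => ?_
  rw [← hd, ← hd]
  exact sum_add_sum_perm_eq_card_sub_one hdiag hρ i
end

section
/- Let (d_1, ..., d_n) be a non-decreasing sequence of non-negative real numbers satisfying condition II, i.e. d_i + d_{n+1-i} = n - 1 for all i = 1, ..., n. If Σ_{i=1}^{k} d_i ≥ binom(k,2) for every k = 1, 2, ..., ⌊n/2⌋, then (d_1, ..., d_n) satisfies condition I: for every subset J of {1,...,n}, Σ_{i∈J} d_i ≥ binom(|J|,2), with equality when J = {1,...,n}. -/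
open Finset

lemma Fin.val_le_val_of_strictMono {m n : ℕ} {f : Fin m → Fin n} (hf : StrictMono f)
    (i : Fin m) : (i : ℕ) ≤ f i := by
  simpa using card_le_card_of_injOn f (fun j hj => by simpa using hf (by simpa using hj))
    hf.injective.injOn (s := Iio i) (t := Iio (f i))

lemma Fin.filter_val_lt_eq_map_castLEEmb {m n : ℕ} (hm : m ≤ n) :
    univ.filter (fun i : Fin n => (i : ℕ) < m) = univ.map (Fin.castLEEmb hm) := by
  ext i
  simp only [mem_filter, mem_univ, true_and, mem_map, Fin.coe_castLEEmb]
  exact ⟨fun hi => ⟨⟨i, hi⟩, rfl⟩, by rintro ⟨k, rfl⟩; exact k.2⟩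

section

variable {n : ℕ} (d : Fin n → ℝ)

/-- `d₁ + ⋯ + dₘ` in the paper's `1`-based indexing. -/
noncomputable def initialSum (m : ℕ) : ℝ :=
  ∑ i ∈ univ.filter (fun i : Fin n => (i : ℕ) < m), d i

lemma initialSum_eq_sum_castLE {m : ℕ} (hm : m ≤ n) :
    initialSum d m = ∑ k : Fin m, d (Fin.castLE hm k) := by
  rw [initialSum, Fin.filter_val_lt_eq_map_castLEEmb hm, sum_map]
  rfl

lemma initialSum_card_le_sum_of_monotone {d} (hd : Monotone d) (J : Finset (Fin n)) :
    initialSum d #J ≤ ∑ i ∈ J, d i := by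
  conv_rhs => rw [← J.map_orderEmbOfFin_univ rfl, sum_map]
  rw [initialSum_eq_sum_castLE d (card_le_univ J |>.trans_eq (Fintype.card_fin n))]
  exact sum_le_sum fun k _ => hd (Fin.val_le_val_of_strictMono (J.orderEmbOfFin rfl).strictMono k)

lemma sum_filter_not_lt_eq_initialSum_rev {m : ℕ} (hm : m ≤ n) :
    ∑ i ∈ univ.filter (fun i : Fin n => ¬ (i : ℕ) < m), d i =
      initialSum (fun j => d j.rev) (n - m) := by
  refine sum_nbij' Fin.rev Fin.rev ?_ ?_ (by simp) (by simp) (by simp)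
  all_goals
    intro i hi
    simp only [mem_filter, mem_univ, true_and, Fin.val_rev] at hi ⊢
    omega

end

namespace CondII

variable {n : ℕ} {d : Fin n → ℝ}

lemma sum_eq_choose_two (hII : CondII d) : ∑ i, d i = n.choose 2 := by
  have hsum : ∑ i, (d i + d i.rev) = n * ((n : ℝ) - 1) := by
    rw [sum_congr rfl fun i _ => hII i, sum_const, card_univ, Fintype.card_fin, nsmul_eq_mul]
  rw [sum_add_distrib, Fintype.sum_equiv Fin.revPerm (fun i => d i.rev) d fun _ => rfl] at hsum
  rw [Nat.cast_choose_two]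
  linarith

lemma initialSum_add_mul {m : ℕ} (hII : CondII d) (hm : m ≤ n) :
    initialSum d m + ((n - m : ℕ) : ℝ) * (n - 1) = n.choose 2 + initialSum d (n - m) := by
  have hrev : initialSum (fun j => d j.rev) (n - m) =
      ((n - m : ℕ) : ℝ) * (n - 1) - initialSum d (n - m) := by
    have hcard : #(univ.filter (fun j : Fin n => (j : ℕ) < n - m)) = n - m := by
      simp [Fin.filter_val_lt_eq_map_castLEEmb (Nat.sub_le n m)]
    rw [initialSum, initialSum, eq_sub_iff_add_eq', ← sum_add_distrib,
      sum_congr rfl fun j _ => hII j, sum_const, hcard, nsmul_eq_mul]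
  rw [← hII.sum_eq_choose_two,
    ← sum_filter_add_sum_filter_not univ (fun i : Fin n => (i : ℕ) < m),
    sum_filter_not_lt_eq_initialSum_rev d hm, hrev, initialSum]
  ring

end CondII

lemma cast_choose_two_add_mul_add_sub_one (m r : ℕ) :
    (m.choose 2 : ℝ) + r * ((m + r : ℕ) - 1) = (m + r).choose 2 + r.choose 2 := by
  simp only [Nat.cast_choose_two, Nat.cast_add]
  ring

lemma CondII.choose_two_le_initialSum {n : ℕ} {d : Fin n → ℝ} (hII : CondII d)
    (hhalf : ∀ k ≤ n / 2, (k.choose 2 : ℝ) ≤ initialSum d k) {m : ℕ} (hm : m ≤ n) :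
    (m.choose 2 : ℝ) ≤ initialSum d m := by
  rcases le_or_gt m (n / 2) with hm_half | hm_half
  · exact hhalf m hm_half
  obtain ⟨r, rfl⟩ := Nat.exists_eq_add_of_le hm
  have hreflect := hII.initialSum_add_mul hm
  rw [Nat.add_sub_cancel_left] at hreflect
  linarith [hhalf r (by omega), cast_choose_two_add_mul_add_sub_one m r]

theorem condI_of_half_initial_segments_general (n : ℕ) (d : Fin n → ℝ)
    (hmono : Monotone d) (hII : CondII d)
    (h : ∀ k, 1 ≤ k → k ≤ n / 2 →
      (k.choose 2 : ℝ) ≤ ∑ i ∈ Finset.univ.filter (fun i : Fin n => (i : ℕ) < k), d i) :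
    CondI d := by
  have hhalf : ∀ k ≤ n / 2, (k.choose 2 : ℝ) ≤ initialSum d k := by
    intro k hk
    rcases Nat.eq_zero_or_pos k with rfl | hk_pos
    · simp [initialSum]
    · exact h k hk_pos hk
  refine ⟨fun J => ?_, hII.sum_eq_choose_two⟩
  have hJ : #J ≤ n := card_le_univ J |>.trans_eq (Fintype.card_fin n)
  exact (hII.choose_two_le_initialSum hhalf hJ).trans
    (initialSum_card_le_sum_of_monotone hmono J)

/-- For non-decreasing non-negative sequences satisfying condition II, condition I need
only be checked on the initial segments `{1, …, k}` for `k = 1, …, ⌊n/2⌋`. -/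
theorem condI_of_half_initial_segments (n : ℕ) (d : Fin n → ℝ)
    (hmono : Monotone d) (hpos : ∀ i, 0 ≤ d i) (hII : CondII d)
    (h : ∀ k, 1 ≤ k → k ≤ n / 2 →
      (k.choose 2 : ℝ) ≤ ∑ i ∈ Finset.univ.filter (fun i : Fin n => (i : ℕ) < k), d i) :
    CondI d :=
  condI_of_half_initial_segments_general n d hmono hII h
end

section
/- Let m be an odd positive integer and let (d_1, ..., d_n) be a non-decreasing sequence of non-negative real numbers satisfying condition I and such that m·d_i is an integer for each i. Define, for i = 1,...,n and ℓ = 1,...,m, the integers c_{i,ℓ} = m·d_i + (m-1)/2. Then the non-decreasing sequence of mn integers consisting of all the c_{i,ℓ} (ordered non-decreasingly) satisfies condition I: for every subset J of these mn indices, the sum of the corresponding entries is at least binom(|J|, 2), with equality when J is the full index set. -/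
open Finset

theorem choose_two_sum_le_card_mul_sum_choose_two {β : Type*} (s : Finset β) (N : β → ℕ) :
    ((∑ b ∈ s, N b).choose 2 : ℝ)
      ≤ #s * ∑ b ∈ s, ((N b).choose 2 : ℝ) + (∑ b ∈ s, N b : ℝ) * (#s - 1) / 2 := by
  have hCS := sq_sum_le_card_mul_sum_sq (s := s) (f := fun b => (N b : ℝ))
  have hsum : ∑ b ∈ s, ((N b).choose 2 : ℝ)
      = (∑ b ∈ s, (N b : ℝ) ^ 2 - ∑ b ∈ s, (N b : ℝ)) / 2 := by
    simp only [Nat.cast_choose_two, ← sum_sub_distrib, sum_div]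
    exact sum_congr rfl fun b _ => by ring
  rw [hsum, Nat.cast_choose_two]
  push_cast
  nlinarith

variable {α β : Type*} [Fintype α] [Fintype β]

theorem sum_blowup_eq_choose_two {d : α → ℝ} (hd : ∑ i, d i = (Fintype.card α).choose 2) :
    ∑ p : α × β, (Fintype.card β * d p.1 + (Fintype.card β - 1) / 2)
      = ((Fintype.card β * Fintype.card α).choose 2 : ℝ) := by
  rw [Fintype.sum_prod_type]
  simp only [sum_const, card_univ, nsmul_eq_mul, sum_add_distrib, ← mul_sum, hd,
    Nat.cast_choose_two]
  push_cast
  ring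

variable [DecidableEq α] [DecidableEq β]

theorem Finset.sum_eq_sum_sum_fiber_snd {M : Type*} [AddCommMonoid M] (J : Finset (α × β))
    (f : α → M) : ∑ p ∈ J, f p.1 = ∑ b, ∑ a with (a, b) ∈ J, f a :=
  sum_finset_product_right' J univ _ (by simp) (f := fun a _ => f a)

theorem choose_two_le_sum_blowup {d : α → ℝ}
    (hd : ∀ S : Finset α, ((#S).choose 2 : ℝ) ≤ ∑ i ∈ S, d i) (J : Finset (α × β)) :
    ((#J).choose 2 : ℝ)
      ≤ ∑ p ∈ J, (Fintype.card β * d p.1 + (Fintype.card β - 1) / 2) := by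
  have hcard : #J = ∑ b, #{a | (a, b) ∈ J} := by
    simpa only [card_eq_sum_ones] using J.sum_eq_sum_sum_fiber_snd (fun _ => 1)
  have hfiber : ∑ b, ((#{a | (a, b) ∈ J}).choose 2 : ℝ) ≤ ∑ p ∈ J, d p.1 := by
    rw [J.sum_eq_sum_sum_fiber_snd]
    exact sum_le_sum fun b _ => hd _
  calc ((#J).choose 2 : ℝ)
      ≤ Fintype.card β * ∑ b, ((#{a | (a, b) ∈ J}).choose 2 : ℝ)
          + #J * (Fintype.card β - 1) / 2 := by
        simpa [hcard] using
          choose_two_sum_le_card_mul_sum_choose_two univ fun b => #{a | (a, b) ∈ J}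
    _ ≤ Fintype.card β * ∑ p ∈ J, d p.1 + #J * (Fintype.card β - 1) / 2 := by gcongr
    _ = ∑ p ∈ J, (Fintype.card β * d p.1 + (Fintype.card β - 1) / 2) := by
        rw [sum_add_distrib, ← mul_sum, sum_const, nsmul_eq_mul]
        ring

theorem blowup_satisfies_condI_general (n m : ℕ)
    (d : Fin n → ℝ) (hI : CondI d) :
    (∀ J : Finset (Fin n × Fin m),
      (J.card.choose 2 : ℝ) ≤ ∑ p ∈ J, ((m : ℝ) * d p.1 + ((m : ℝ) - 1) / 2)) ∧
    ∑ p : Fin n × Fin m, ((m : ℝ) * d p.1 + ((m : ℝ) - 1) / 2)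
      = (((m * n).choose 2 : ℕ) : ℝ) := by
  obtain ⟨hsub, htotal⟩ := hI
  constructor
  · simpa using choose_two_le_sum_blowup (β := Fin m) hsub
  · simpa using sum_blowup_eq_choose_two (β := Fin m) (d := d) (by simpa using htotal)

/-- The blown-up array `c (i,ℓ) = m·d i + (m-1)/2` (`mn` entries indexed by
`Fin n × Fin m`) satisfies condition I whenever `(d i)` does. -/
theorem blowup_satisfies_condI (n m : ℕ) (hm : Odd m) (hm0 : 0 < m)
    (d : Fin n → ℝ) (hmono : Monotone d) (hpos : ∀ i, 0 ≤ d i) (hI : CondI d)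
    (hint : ∀ i, ∃ z : ℕ, (m : ℝ) * d i = (z : ℝ)) :
    (∀ J : Finset (Fin n × Fin m),
      (J.card.choose 2 : ℝ) ≤ ∑ p ∈ J, ((m : ℝ) * d p.1 + ((m : ℝ) - 1) / 2)) ∧
    ∑ p : Fin n × Fin m, ((m : ℝ) * d p.1 + ((m : ℝ) - 1) / 2)
      = (((m * n).choose 2 : ℕ) : ℝ) :=
  blowup_satisfies_condI_general n m d hI
end
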